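/- Under the LATE assumptions (without EMCO), the reduced-form effect of Z on Y·1(D=d) for d > 0 decomposes as: E[Y·1(D=d)|Z=1] − E[Y·1(D=d)|Z=0] = E[Y(d)|D(1)=d>D(0)=0]·P(D(1)=d>D(0)=0) + E[Y(d)|D(1)=d>D(0)>0]·P(D(1)=d>D(0)>0) − E[Y(d)|D(1)>D(0)=d]·P(D(1)>D(0)=d), where terms with zero-probability conditioning events are interpreted as 0. -/

import Mathlib

open MeasureTheory ProbabilityTheory

variable {Ω : Type*}

/-- probability of a set -/
noncomputable def pr [MeasurableSpace Ω] (μ : MeasureTheory.Measure Ω) (A : Set Ω) : ℝ :=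
  (μ A).toReal

/-- conditional probability P(A | B) -/
noncomputable def cP [MeasurableSpace Ω] (μ : MeasureTheory.Measure Ω) (A B : Set Ω) : ℝ :=
  pr μ (A ∩ B) / pr μ B

/-- conditional expectation E[f | B] -/
noncomputable def cE [MeasurableSpace Ω] (μ : MeasureTheory.Measure Ω) (f : Ω → ℝ) (B : Set Ω) : ℝ :=
  (∫ ω in B, f ω ∂μ) / pr μ B

/-- observed treatment D = Z·D(1) + (1−Z)·D(0) -/
def obsD (Z D0 D1 : Ω → ℕ) : Ω → ℕ := fun ω => if Z ω = 1 then D1 ω else D0 ω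

/-- observed outcome Y = Y(D) -/
noncomputable def obsY (Z D0 D1 : Ω → ℕ) (Yp : ℕ → Ω → ℝ) : Ω → ℝ :=
  fun ω => Yp (obsD Z D0 D1 ω) ω

/-! Independence of `Z` from `(D(0), D(1), Y(·))` turns each arm of the reduced form into an
unconditional mean: `E[Y·1(D = d) | Z = z] = E[Y(d)·1(D(z) = d)]`. In the difference of the two arms
the always-`d` units `D(1) = D(0) = d` cancel; by monotonicity what is left is the event
`D(1) = d > D(0)`, split at `D(0) = 0`, minus the event `D(1) > D(0) = d`. -/

namespace MeasureTheory

variable [MeasurableSpace Ω] {μ : Measure Ω}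

lemma pr_eq_measureReal (A : Set Ω) : pr μ A = μ.real A := rfl

lemma pr_eq_zero_iff [IsFiniteMeasure μ] {A : Set Ω} : pr μ A = 0 ↔ μ A = 0 := by
  simp [pr, ENNReal.toReal_eq_zero_iff, measure_ne_top]

lemma pr_compl [IsProbabilityMeasure μ] {A : Set Ω} (hA : MeasurableSet A) :
    pr μ Aᶜ = 1 - pr μ A :=
  probReal_compl_eq_one_sub hA

lemma cE_mul_pr [IsFiniteMeasure μ] (f : Ω → ℝ) (B : Set Ω) :
    cE μ f B * pr μ B = ∫ ω in B, f ω ∂μ := by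
  rcases eq_or_ne (pr μ B) 0 with h | h
  · rw [h, mul_zero, Measure.restrict_eq_zero.mpr (pr_eq_zero_iff.mp h), integral_zero_measure]
  · rw [cE, div_mul_cancel₀ _ h]

lemma cE_congr {f g : Ω → ℝ} {B : Set Ω} (hB : MeasurableSet B) (h : Set.EqOn f g B) :
    cE μ f B = cE μ g B := by
  rw [cE, cE, setIntegral_congr_fun hB h]

lemma setIntegral_sub_setIntegral {f : Ω → ℝ} {S T : Set Ω} (hS : MeasurableSet S)
    (hT : MeasurableSet T) (hf : Integrable f μ) :
    ∫ ω in S, f ω ∂μ - ∫ ω in T, f ω ∂μ = ∫ ω in S \ T, f ω ∂μ - ∫ ω in T \ S, f ω ∂μ := by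
  rw [← integral_inter_add_sdiff hT hf.integrableOn,
    ← integral_inter_add_sdiff hS (s := T) hf.integrableOn, Set.inter_comm]
  ring

end MeasureTheory

namespace ProbabilityTheory

variable {β γ : Type*} [MeasurableSpace Ω] {μ : Measure Ω} [MeasurableSpace β] [MeasurableSpace γ]

lemma IndepFun.cE_comp_preimage {X : Ω → β} {Z : Ω → γ} (h : IndepFun X Z μ)
    (hZ : Measurable Z) {φ : β → ℝ} (hφ : Measurable φ)
    (hφX : AEStronglyMeasurable (φ ∘ X) μ) {s : Set γ} (hs : MeasurableSet s)
    (hpos : pr μ (Z ⁻¹' s) ≠ 0) :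
    cE μ (φ ∘ X) (Z ⁻¹' s) = ∫ ω, φ (X ω) ∂μ := by
  have hψ : Measurable (s.indicator fun _ => (1 : ℝ)) := measurable_const.indicator hs
  have hprod : ∫ ω in Z ⁻¹' s, φ (X ω) ∂μ = (∫ ω, φ (X ω) ∂μ) * pr μ (Z ⁻¹' s) :=
    calc ∫ ω in Z ⁻¹' s, φ (X ω) ∂μ = ∫ ω, φ (X ω) * s.indicator (fun _ => 1) (Z ω) ∂μ := by
          rw [← integral_indicator (hZ hs)]
          congr 1 with ω
          by_cases hω : Z ω ∈ s <;> simp [hω]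
      _ = (∫ ω, φ (X ω) ∂μ) * ∫ ω, s.indicator (fun _ => 1) (Z ω) ∂μ :=
          (h.comp hφ hψ).integral_fun_mul_eq_mul_integral hφX (hψ.comp hZ).aestronglyMeasurable
      _ = (∫ ω, φ (X ω) ∂μ) * pr μ (Z ⁻¹' s) := by
          rw [pr_eq_measureReal, ← integral_indicator_one (hZ hs)]
          rfl
  rw [cE, Function.comp_def, hprod, mul_div_cancel_right₀ _ hpos]

end ProbabilityTheory

section

variable {Z D0 D1 T : Ω → ℕ} {Yp : ℕ → Ω → ℝ} {d : ℕ}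

lemma ite_obsD_eq_indicator {ω : Ω} (h : obsD Z D0 D1 ω = T ω) :
    (if obsD Z D0 D1 ω = d then obsY Z D0 D1 Yp ω else 0) = {ω | T ω = d}.indicator (Yp d) ω := by
  simp only [obsY, h, Set.indicator_apply, Set.mem_ofPred_eq]
  split_ifs with hT
  · rw [hT]
  · rfl

variable [MeasurableSpace Ω] {μ : Measure Ω}

lemma cE_obs_eq_setIntegral (hZ : Measurable Z) (hT : Measurable T) (hY : Integrable (Yp d) μ)
    (hind : IndepFun (fun ω => (T ω, Yp d ω)) Z μ) {z : ℕ}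
    (hobs : ∀ ω, Z ω = z → obsD Z D0 D1 ω = T ω) (hpos : pr μ {ω | Z ω = z} ≠ 0) :
    cE μ (fun ω => if obsD Z D0 D1 ω = d then obsY Z D0 D1 Yp ω else 0) {ω | Z ω = z} =
      ∫ ω in {ω | T ω = d}, Yp d ω ∂μ := by
  have hTd : MeasurableSet {ω | T ω = d} := hT (measurableSet_singleton d)
  have hZz : MeasurableSet {ω | Z ω = z} := hZ (measurableSet_singleton z)
  rw [cE_congr hZz fun ω hω => ite_obsD_eq_indicator (hobs ω hω), ← integral_indicator hTd]
  exact hind.cE_comp_preimage (φ := {p : ℕ × ℝ | p.1 = d}.indicator Prod.snd) hZ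
    (measurable_snd.indicator (measurable_fst (measurableSet_singleton d)))
    (hY.indicator hTd).aestronglyMeasurable (measurableSet_singleton z) hpos

lemma sdiff_ae_eq_union_of_ae_le (hmono : ∀ᵐ ω ∂μ, D0 ω ≤ D1 ω) (hd : 0 < d) :
    ({ω | D1 ω = d} \ {ω | D0 ω = d} : Set Ω) =ᵐ[μ]
      ({ω | D1 ω = d ∧ D0 ω = 0} ∪ {ω | D1 ω = d ∧ 0 < D0 ω ∧ D0 ω < d} : Set Ω) := by
  rw [Filter.eventuallyEq_set]
  filter_upwards [hmono] with ω hω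
  simp only [Set.mem_sdiff, Set.mem_union, Set.mem_ofPred_eq]
  omega

lemma sdiff_ae_eq_of_ae_le (hmono : ∀ᵐ ω ∂μ, D0 ω ≤ D1 ω) :
    ({ω | D0 ω = d} \ {ω | D1 ω = d} : Set Ω) =ᵐ[μ] {ω | d < D1 ω ∧ D0 ω = d} := by
  rw [Filter.eventuallyEq_set]
  filter_upwards [hmono] with ω hω
  simp only [Set.mem_sdiff, Set.mem_ofPred_eq]
  omega

end

theorem reduced_form_decomposition_general
    [MeasurableSpace Ω] (μ : MeasureTheory.Measure Ω) [IsProbabilityMeasure μ]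
    (Z D0 D1 : Ω → ℕ) (Yp : ℕ → Ω → ℝ)
    (hZ01 : ∀ ω, Z ω = 0 ∨ Z ω = 1)
    (hZm : Measurable Z) (hD0m : Measurable D0) (hD1m : Measurable D1)
    (hYint : ∀ d, Integrable (Yp d) μ)
    (hindep : IndepFun (fun ω => (D0 ω, D1 ω, fun d => Yp d ω)) Z μ)
    (hmono : ∀ᵐ ω ∂μ, D0 ω ≤ D1 ω)
    (hZ1pos : 0 < pr μ {ω | Z ω = 1}) (hZ1lt : pr μ {ω | Z ω = 1} < 1)
    (d : ℕ) (hd : 0 < d) :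
    cE μ (fun ω => if obsD Z D0 D1 ω = d then obsY Z D0 D1 Yp ω else 0) {ω | Z ω = 1} -
      cE μ (fun ω => if obsD Z D0 D1 ω = d then obsY Z D0 D1 Yp ω else 0) {ω | Z ω = 0} =
    cE μ (Yp d) {ω | D1 ω = d ∧ D0 ω = 0} * pr μ {ω | D1 ω = d ∧ D0 ω = 0} +
      cE μ (Yp d) {ω | D1 ω = d ∧ 0 < D0 ω ∧ D0 ω < d} *
        pr μ {ω | D1 ω = d ∧ 0 < D0 ω ∧ D0 ω < d} -
      cE μ (Yp d) {ω | d < D1 ω ∧ D0 ω = d} * pr μ {ω | d < D1 ω ∧ D0 ω = d} := by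
  have hmeas (p : ℕ × ℕ → Prop) : MeasurableSet {ω | p (D0 ω, D1 ω)} :=
    hD0m.prodMk hD1m .of_discrete
  have hZ1m : MeasurableSet {ω | Z ω = 1} := hZm (measurableSet_singleton 1)
  have hZ0pos : pr μ {ω | Z ω = 0} ≠ 0 := by
    have hcompl : {ω | Z ω = 0} = {ω | Z ω = 1}ᶜ := by
      ext ω
      rcases hZ01 ω with h | h <;> simp [h]
    rw [hcompl, pr_compl hZ1m]
    linarith
  have hind1 : IndepFun (fun ω => (D1 ω, Yp d ω)) Z μ :=
    hindep.comp (φ := fun p => (p.2.1, p.2.2 d)) (by fun_prop) measurable_id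
  have hind0 : IndepFun (fun ω => (D0 ω, Yp d ω)) Z μ :=
    hindep.comp (φ := fun p => (p.1, p.2.2 d)) (by fun_prop) measurable_id
  have hdisj : Disjoint {ω | D1 ω = d ∧ D0 ω = 0} {ω | D1 ω = d ∧ 0 < D0 ω ∧ D0 ω < d} :=
    Set.disjoint_left.2 fun ω h₁ h₂ => by simp only [Set.mem_ofPred_eq] at h₁ h₂; omega
  rw [cE_obs_eq_setIntegral hZm hD1m (hYint d) hind1 (fun ω h => if_pos h) hZ1pos.ne',
    cE_obs_eq_setIntegral hZm hD0m (hYint d) hind0 (fun ω h => if_neg (by omega)) hZ0pos,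
    setIntegral_sub_setIntegral (hmeas fun p => p.2 = d) (hmeas fun p => p.1 = d) (hYint d),
    setIntegral_congr_set (sdiff_ae_eq_union_of_ae_le hmono hd),
    setIntegral_congr_set (sdiff_ae_eq_of_ae_le hmono),
    setIntegral_union hdisj (hmeas fun p => p.2 = d ∧ 0 < p.1 ∧ p.1 < d) (hYint d).integrableOn
      (hYint d).integrableOn,
    cE_mul_pr, cE_mul_pr, cE_mul_pr]

/-- decomposition of the reduced-form effect of Z on Y·1(D=d) under
LATE (without EMCO); conditional expectations given null events are 0 by
convention (division by zero). -/
theorem reduced_form_decomposition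
    [MeasurableSpace Ω] (μ : MeasureTheory.Measure Ω) [IsProbabilityMeasure μ]
    (Dbar : ℕ) (Z D0 D1 : Ω → ℕ) (Yp : ℕ → Ω → ℝ)
    (hZ01 : ∀ ω, Z ω = 0 ∨ Z ω = 1)
    (hZm : Measurable Z) (hD0m : Measurable D0) (hD1m : Measurable D1)
    (hD0b : ∀ ω, D0 ω ≤ Dbar) (hD1b : ∀ ω, D1 ω ≤ Dbar)
    (hYm : ∀ d, Measurable (Yp d)) (hYint : ∀ d, Integrable (Yp d) μ)
    (hindep : IndepFun (fun ω => (D0 ω, D1 ω, fun d => Yp d ω)) Z μ)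
    (hmono : ∀ᵐ ω ∂μ, D0 ω ≤ D1 ω)
    (hZ1pos : 0 < pr μ {ω | Z ω = 1}) (hZ1lt : pr μ {ω | Z ω = 1} < 1)
    (d : ℕ) (hd : 0 < d) (hdD : d ≤ Dbar) :
    cE μ (fun ω => if obsD Z D0 D1 ω = d then obsY Z D0 D1 Yp ω else 0) {ω | Z ω = 1} -
      cE μ (fun ω => if obsD Z D0 D1 ω = d then obsY Z D0 D1 Yp ω else 0) {ω | Z ω = 0} =
    cE μ (Yp d) {ω | D1 ω = d ∧ D0 ω = 0} * pr μ {ω | D1 ω = d ∧ D0 ω = 0} +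
      cE μ (Yp d) {ω | D1 ω = d ∧ 0 < D0 ω ∧ D0 ω < d} *
        pr μ {ω | D1 ω = d ∧ 0 < D0 ω ∧ D0 ω < d} -
      cE μ (Yp d) {ω | d < D1 ω ∧ D0 ω = d} * pr μ {ω | d < D1 ω ∧ D0 ω = d} :=
  reduced_form_decomposition_general μ Z D0 D1 Yp hZ01 hZm hD0m hD1m hYint hindep hmono hZ1pos hZ1lt
    d hd
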